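/- Along any CAVI sequence the ELBO increases monotonically: ELBO(q⁽ⁿ⁺¹⁾) ≥ ELBO(q⁽ⁿ⁾) for all n; moreover ELBO(q⁽ⁿ⁾) ≤ log(Σ_z p z) for all n, and hence the real sequence (ELBO(q⁽ⁿ⁾))_n converges. -/

import Mathlib

open Finset

variable {ι : Type*} {Z : ι → Type*}

/-- The ELBO of a mean-field family `q` for joint density `p`. -/
noncomputable def meanFieldELBO [Fintype ι] [DecidableEq ι] [∀ i, Fintype (Z i)]
    (p : (∀ i, Z i) → ℝ) (q : ∀ i, Z i → ℝ) : ℝ :=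
  ∑ z : ∀ i, Z i, (∏ i, q i (z i)) * (Real.log (p z) - ∑ i, Real.log (q i (z i)))

/-- `E₋ₖ(y)`: the expectation, over the coordinates other than `k` (distributed
according to the factors `q i`, `i ≠ k`), of `log p` of the configuration equal to `y`
at coordinate `k`. -/
noncomputable def Eminus [Fintype ι] [DecidableEq ι] [∀ i, Fintype (Z i)]
    (p : (∀ i, Z i) → ℝ) (q : ∀ i, Z i → ℝ) (k : ι) (y : Z k) : ℝ :=
  ∑ w : ∀ i : {i : ι // i ≠ k}, Z i, (∏ i : {i : ι // i ≠ k}, q i (w i)) *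
    Real.log (p (fun i => if h : i = k then h.symm ▸ y else w ⟨i, h⟩))

/-- The CAVI update at coordinate `k`: the pmf proportional to `exp (E₋ₖ ·)`. -/
noncomputable def caviUpdate [Fintype ι] [DecidableEq ι] [∀ i, Fintype (Z i)]
    (p : (∀ i, Z i) → ℝ) (q : ∀ i, Z i → ℝ) (k : ι) (y : Z k) : ℝ :=
  Real.exp (Eminus p q k y) / ∑ y' : Z k, Real.exp (Eminus p q k y')

/-! Writing the ELBO with coordinate `k` isolated, it equals `∑ y, q k y * (E₋ₖ y - log (q k y))`
plus a term that does not involve `q k`. By Gibbs' inequality (Jensen for the concave `log`) the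
first part is at most `log ∑ y, exp (E₋ₖ y)`, with equality at the softmax of `E₋ₖ`, which is the
CAVI update; so each CAVI step cannot decrease the ELBO. Gibbs' inequality for the product weights
`∏ i, q i (z i)` bounds the ELBO by `log ∑ z, p z`, and a monotone bounded sequence converges. -/

open Real

section Gibbs

variable {α : Type*} [Fintype α]

theorem sum_mul_log_sub_log_le_log_sum {w a : α → ℝ} (hw : ∀ x, 0 < w x)
    (hw1 : ∑ x, w x = 1) (ha : ∀ x, 0 < a x) :
    ∑ x, w x * (log (a x) - log (w x)) ≤ log (∑ x, a x) := by
  have hlog : ∀ x, w x * (log (a x) - log (w x)) = w x • log (a x / w x) := fun x => by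
    rw [log_div (ha x).ne' (hw x).ne', smul_eq_mul]
  have hmean : ∀ x, w x • (a x / w x) = a x := fun x => by
    rw [smul_eq_mul, mul_div_cancel₀ _ (hw x).ne']
  simp only [hlog, ← Fintype.sum_congr _ _ hmean]
  exact strictConcaveOn_log_Ioi.concaveOn.le_map_sum (fun x _ => (hw x).le) hw1
    fun x _ => div_pos (ha x) (hw x)

theorem sum_mul_sub_log_le_log_sum_exp (f : α → ℝ) {w : α → ℝ} (hw : ∀ x, 0 < w x)
    (hw1 : ∑ x, w x = 1) :
    ∑ x, w x * (f x - log (w x)) ≤ log (∑ x, exp (f x)) := by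
  simpa only [log_exp] using sum_mul_log_sub_log_le_log_sum hw hw1 fun x => exp_pos (f x)

theorem sum_exp_div_sum_exp [Nonempty α] (f : α → ℝ) :
    ∑ x, exp (f x) / ∑ y, exp (f y) = 1 := by
  rw [← sum_div, div_self (sum_pos (fun x _ => exp_pos (f x)) univ_nonempty).ne']

theorem sum_exp_div_mul_sub_log_eq_log_sum_exp [Nonempty α] (f : α → ℝ) :
    ∑ x, exp (f x) / (∑ y, exp (f y)) * (f x - log (exp (f x) / ∑ y, exp (f y)))
      = log (∑ x, exp (f x)) := by
  have hS : 0 < ∑ y, exp (f y) := sum_pos (fun x _ => exp_pos (f x)) univ_nonempty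
  simp_rw [log_div (exp_pos _).ne' hS.ne', log_exp, sub_sub_cancel]
  rw [← sum_mul, sum_exp_div_sum_exp, one_mul]

end Gibbs

theorem sum_prod_eq_one {κ : Type*} [Fintype κ] [DecidableEq κ] {Y : κ → Type*}
    [∀ i, Fintype (Y i)] {q : ∀ i, Y i → ℝ} (hq1 : ∀ i, ∑ y, q i y = 1) :
    ∑ z : ∀ i, Y i, ∏ i, q i (z i) = 1 := by
  rw [← Fintype.prod_sum]
  simp [hq1]

section MeanField

variable [Fintype ι] [DecidableEq ι] [∀ i, Fintype (Z i)]

noncomputable def offNegEntropy (q : ∀ i, Z i → ℝ) (k : ι) : ℝ :=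
  ∑ w : ∀ i : {i : ι // i ≠ k}, Z i,
    (∏ i : {i : ι // i ≠ k}, q i (w i)) * ∑ i : {i : ι // i ≠ k}, log (q i (w i))

theorem meanFieldELBO_eq_sum_sub_offNegEntropy (p : (∀ i, Z i) → ℝ) {q : ∀ i, Z i → ℝ}
    (hq1 : ∀ i, ∑ y, q i y = 1) (k : ι) :
    meanFieldELBO p q = ∑ y, q k y * (Eminus p q k y - log (q k y)) - offNegEntropy q k := by
  have hsplit : ∀ (y : Z k) (w : ∀ i : {i : ι // i ≠ k}, Z i),
      (∏ i, q i ((Equiv.piSplitAt k Z).symm (y, w) i)) *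
        (log (p ((Equiv.piSplitAt k Z).symm (y, w))) -
          ∑ i, log (q i ((Equiv.piSplitAt k Z).symm (y, w) i)))
      = q k y * ((∏ i : {i : ι // i ≠ k}, q i (w i)) *
            log (p ((Equiv.piSplitAt k Z).symm (y, w))))
        - q k y * log (q k y) * ∏ i : {i : ι // i ≠ k}, q i (w i)
        - q k y * ((∏ i : {i : ι // i ≠ k}, q i (w i)) *
            ∑ i : {i : ι // i ≠ k}, log (q i (w i))) := by
    intro y w
    have hk : (Equiv.piSplitAt k Z).symm (y, w) k = y := by simp
    have hne : ∀ i : {i : ι // i ≠ k}, (Equiv.piSplitAt k Z).symm (y, w) i = w i :=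
      fun i => dif_neg i.2
    rw [Fintype.prod_eq_mul_prod_subtype_ne _ k, Fintype.sum_eq_add_sum_subtype_ne _ k]
    simp only [hk, hne]
    ring
  rw [meanFieldELBO, ← (Equiv.piSplitAt k Z).symm.sum_comp, Fintype.sum_prod_type]
  simp only [hsplit, sum_sub_distrib, ← mul_sum, ← sum_mul]
  rw [sum_prod_eq_one (q := fun i : {i : ι // i ≠ k} => q i) fun i => hq1 i, hq1 k, mul_one,
    one_mul, offNegEntropy]
  simp only [mul_sub, sum_sub_distrib]
  -- `Eminus` is written with the very `dite` that defines `(Equiv.piSplitAt k Z).symm`.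
  rfl

theorem Eminus_congr (p : (∀ i, Z i) → ℝ) {q q' : ∀ i, Z i → ℝ} {k : ι}
    (h : ∀ i ≠ k, q' i = q i) : Eminus p q' k = Eminus p q k := by
  have h' : ∀ i : {i : ι // i ≠ k}, q' i = q i := fun i => h i i.2
  ext y
  simp only [Eminus, h']

theorem offNegEntropy_congr {q q' : ∀ i, Z i → ℝ} {k : ι} (h : ∀ i ≠ k, q' i = q i) :
    offNegEntropy q' k = offNegEntropy q k := by
  have h' : ∀ i : {i : ι // i ≠ k}, q' i = q i := fun i => h i i.2
  simp only [offNegEntropy, h']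

theorem meanFieldELBO_le_update_caviUpdate (p : (∀ i, Z i) → ℝ) {q : ∀ i, Z i → ℝ}
    (hq1 : ∀ i, ∑ y, q i y = 1) (k : ι) (hqk : ∀ y, 0 < q k y) [Nonempty (Z k)] :
    meanFieldELBO p q ≤ meanFieldELBO p (Function.update q k (caviUpdate p q k)) := by
  have hoff : ∀ i ≠ k, Function.update q k (caviUpdate p q k) i = q i :=
    fun i hi => Function.update_of_ne hi _ _
  have hq'1 : ∀ i, ∑ y, Function.update q k (caviUpdate p q k) i y = 1 := by
    intro i
    rcases eq_or_ne i k with rfl | hi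
    · rw [Function.update_self]
      exact sum_exp_div_sum_exp _
    · rw [hoff i hi, hq1 i]
  rw [meanFieldELBO_eq_sum_sub_offNegEntropy p hq1 k,
    meanFieldELBO_eq_sum_sub_offNegEntropy p hq'1 k, Eminus_congr p hoff,
    offNegEntropy_congr hoff, Function.update_self]
  gcongr ?_ - _
  calc ∑ y, q k y * (Eminus p q k y - log (q k y))
      ≤ log (∑ y, exp (Eminus p q k y)) := sum_mul_sub_log_le_log_sum_exp _ hqk (hq1 k)
    _ = ∑ y, caviUpdate p q k y * (Eminus p q k y - log (caviUpdate p q k y)) :=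
      (sum_exp_div_mul_sub_log_eq_log_sum_exp _).symm

theorem meanFieldELBO_le_log_sum {p : (∀ i, Z i) → ℝ} (hp : ∀ z, 0 < p z)
    {q : ∀ i, Z i → ℝ} (hq : ∀ i y, 0 < q i y) (hq1 : ∀ i, ∑ y, q i y = 1) :
    meanFieldELBO p q ≤ log (∑ z, p z) := by
  have hlog_prod : ∀ z : ∀ i, Z i, ∑ i, log (q i (z i)) = log (∏ i, q i (z i)) :=
    fun z => (log_prod fun i _ => (hq i (z i)).ne').symm
  simp only [meanFieldELBO, hlog_prod]
  exact sum_mul_log_sub_log_le_log_sum (fun z => prod_pos fun i _ => hq i (z i))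
    (sum_prod_eq_one hq1) hp

end MeanField

theorem cavi_sequence_elbo_monotone_bounded_converges_general [Fintype ι] [DecidableEq ι]
    [∀ i, Fintype (Z i)] [∀ i, Nonempty (Z i)]
    (p : (∀ i, Z i) → ℝ) (hp : ∀ z, 0 < p z)
    (Q : ℕ → ∀ i, Z i → ℝ)
    (hQpos : ∀ n i y, 0 < Q n i y) (hQ1 : ∀ n i, ∑ y, Q n i y = 1)
    (hCAVI : ∀ n, ∃ k : ι, (∀ i, i ≠ k → Q (n + 1) i = Q n i) ∧
      Q (n + 1) k = caviUpdate p (Q n) k) :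
    (∀ n, meanFieldELBO p (Q n) ≤ meanFieldELBO p (Q (n + 1))) ∧
    (∀ n, meanFieldELBO p (Q n) ≤ Real.log (∑ z : ∀ i, Z i, p z)) ∧
    ∃ L : ℝ, Filter.Tendsto (fun n => meanFieldELBO p (Q n)) Filter.atTop (nhds L) := by
  have hmono : ∀ n, meanFieldELBO p (Q n) ≤ meanFieldELBO p (Q (n + 1)) := by
    intro n
    obtain ⟨k, hoff, hk⟩ := hCAVI n
    have hstep : Q (n + 1) = Function.update (Q n) k (caviUpdate p (Q n) k) := by
      rw [Function.eq_update_iff]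
      exact ⟨hk, hoff⟩
    rw [hstep]
    exact meanFieldELBO_le_update_caviUpdate p (hQ1 n) k (hQpos n k)
  have hbdd : ∀ n, meanFieldELBO p (Q n) ≤ log (∑ z, p z) :=
    fun n => meanFieldELBO_le_log_sum hp (hQpos n) (hQ1 n)
  exact ⟨hmono, hbdd, _, tendsto_atTop_ciSup (monotone_nat_of_le_succ hmono)
    ⟨_, Set.forall_mem_range.2 hbdd⟩⟩

/-- Along any CAVI sequence the ELBO increases monotonically, is bounded above by the
log evidence, and hence converges. -/
theorem cavi_sequence_elbo_monotone_bounded_converges [Fintype ι] [DecidableEq ι]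
    [Nonempty ι] [∀ i, Fintype (Z i)] [∀ i, Nonempty (Z i)]
    (p : (∀ i, Z i) → ℝ) (hp : ∀ z, 0 < p z)
    (Q : ℕ → ∀ i, Z i → ℝ)
    (hQpos : ∀ n i y, 0 < Q n i y) (hQ1 : ∀ n i, ∑ y, Q n i y = 1)
    (hCAVI : ∀ n, ∃ k : ι, (∀ i, i ≠ k → Q (n + 1) i = Q n i) ∧
      Q (n + 1) k = caviUpdate p (Q n) k) :
    (∀ n, meanFieldELBO p (Q n) ≤ meanFieldELBO p (Q (n + 1))) ∧
    (∀ n, meanFieldELBO p (Q n) ≤ Real.log (∑ z : ∀ i, Z i, p z)) ∧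
    ∃ L : ℝ, Filter.Tendsto (fun n => meanFieldELBO p (Q n)) Filter.atTop (nhds L) :=
  cavi_sequence_elbo_monotone_bounded_converges_general p hp Q hQpos hQ1 hCAVI
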